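/- arXiv:2604.13921 — 3 statements merged into one kernel-verified Lean document; each statement's English description precedes it below -/
import Mathlib

section
/- Let M_ε, M_μ be symmetric positive definite matrices, C a real matrix, λ_M the largest eigenvalue of C M_ε⁻¹ Cᵀ u = λ M_μ u, and Δt > 0 with Δt < 2/√λ_M. Then every solution of the leap-frog recursion e^{q+1} = e^q + Δt M_ε⁻¹ Cᵀ h^{q+1/2}, h^{q+1/2} = h^{q−1/2} − Δt M_μ⁻¹ C e^q remains bounded uniformly in q; equivalently, the one-step iteration matrix of the leap-frog scheme is power-bounded. -/
/-!
In the variables `x = Mε^{1/2} e`, `y = Mμ^{1/2} h` the scheme becomes the leap-frog iteration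
`x' = x + Δt K y`, `y' = y - Δt K† x'` for `K = Mε^{-1/2} Cᵀ Mμ^{-1/2}`. Since
`KᵀK = Mμ^{-1/2} (C Mε⁻¹ Cᵀ) Mμ^{-1/2}` has the same eigenvalues as the pencil, `‖K‖² ≤ λ_M`.
The iteration conserves the energy `⟪x_q, x_{q+1}⟫ + ‖y_q‖²`, and as
`⟪x_q, x_{q+1}⟫ = ‖x_q‖² + Δt ⟪x_q, K y_q⟫`, the energy dominates
`(1 - Δt ‖K‖ / 2) (‖x_q‖² + ‖y_q‖²)`, which is coercive precisely under the CFL condition.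
-/

open Matrix
open scoped MatrixOrder InnerProduct RealInnerProductSpace

section LeapFrog

variable {E F : Type*} [NormedAddCommGroup E] [InnerProductSpace ℝ E] [CompleteSpace E]
  [NormedAddCommGroup F] [InnerProductSpace ℝ F] [CompleteSpace F]

def IsLeapFrogOrbit (K : F →L[ℝ] E) (τ : ℝ) (x : ℕ → E) (y : ℕ → F) : Prop :=
  ∀ q, x (q + 1) = x q + τ • K (y q) ∧ y (q + 1) = y q - τ • (K†) (x (q + 1))

/-- Pairs `x` at consecutive steps: this, not `‖x q‖ ^ 2 + ‖y q‖ ^ 2`, is what the scheme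
conserves. -/
def leapFrogEnergy (x : ℕ → E) (y : ℕ → F) (q : ℕ) : ℝ :=
  ⟪x q, x (q + 1)⟫ + ‖y q‖ ^ 2

namespace IsLeapFrogOrbit

variable {K : F →L[ℝ] E} {τ : ℝ} {x : ℕ → E} {y : ℕ → F}

theorem leapFrogEnergy_succ (hxy : IsLeapFrogOrbit K τ x y) (q : ℕ) :
    leapFrogEnergy x y (q + 1) = leapFrogEnergy x y q := by
  obtain ⟨hx, hy⟩ := hxy q
  have hxq : x q = x (q + 1) - τ • K (y q) := by rw [hx]; abel
  rw [leapFrogEnergy, leapFrogEnergy, (hxy (q + 1)).1, hy, hxq]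
  set a := x (q + 1)
  set b := y q
  set u := (K†) a
  have haKb : ⟪a, K b⟫ = ⟪u, b⟫ := (K.adjoint_inner_left b a).symm
  have hKba : ⟪K b, a⟫ = ⟪u, b⟫ := by rw [real_inner_comm, haKb]
  have hbu : ⟪b, u⟫ = ⟪u, b⟫ := real_inner_comm _ _
  have haKu : ⟪a, K u⟫ = ⟪u, u⟫ := (K.adjoint_inner_left u a).symm
  simp only [inner_add_right, inner_sub_left, inner_sub_right, inner_smul_left, inner_smul_right,
    map_sub, map_smul, ← real_inner_self_eq_norm_sq, haKb, hKba, hbu, haKu, conj_trivial]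
  ring

theorem leapFrogEnergy_eq_initial (hxy : IsLeapFrogOrbit K τ x y) (q : ℕ) :
    leapFrogEnergy x y q = leapFrogEnergy x y 0 := by
  induction q with
  | zero => rfl
  | succ q ih => rw [hxy.leapFrogEnergy_succ, ih]

theorem le_leapFrogEnergy (hxy : IsLeapFrogOrbit K τ x y) (hτ : 0 ≤ τ) (q : ℕ) :
    (1 - τ * ‖K‖ / 2) * (‖x q‖ ^ 2 + ‖y q‖ ^ 2) ≤ leapFrogEnergy x y q := by
  have hcross : -(‖K‖ * ‖x q‖ * ‖y q‖) ≤ ⟪x q, K (y q)⟫ := by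
    refine neg_le_of_abs_le ((abs_real_inner_le_norm _ _).trans ?_)
    calc ‖x q‖ * ‖K (y q)‖ ≤ ‖x q‖ * (‖K‖ * ‖y q‖) := by gcongr; exact K.le_opNorm _
      _ = _ := by ring
  have hamgm : ‖x q‖ * ‖y q‖ ≤ (‖x q‖ ^ 2 + ‖y q‖ ^ 2) / 2 := by
    nlinarith [sq_nonneg (‖x q‖ - ‖y q‖)]
  rw [leapFrogEnergy, (hxy q).1, inner_add_right, inner_smul_right, real_inner_self_eq_norm_sq]
  nlinarith [mul_le_mul_of_nonneg_left hcross hτ, mul_le_mul_of_nonneg_left hamgm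
    (mul_nonneg hτ (norm_nonneg K))]

theorem exists_norm_le (hxy : IsLeapFrogOrbit K τ x y) (hτ : 0 ≤ τ) (hCFL : τ * ‖K‖ < 2) :
    ∃ B, ∀ q, ‖x q‖ ≤ B ∧ ‖y q‖ ≤ B := by
  have hδ : 0 < 1 - τ * ‖K‖ / 2 := by linarith
  set δ := 1 - τ * ‖K‖ / 2
  refine ⟨√(leapFrogEnergy x y 0 / δ), fun q => ?_⟩
  have hsum : ‖x q‖ ^ 2 + ‖y q‖ ^ 2 ≤ leapFrogEnergy x y 0 / δ := by
    rw [le_div_iff₀' hδ, ← hxy.leapFrogEnergy_eq_initial q]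
    exact hxy.le_leapFrogEnergy hτ q
  constructor <;> refine Real.le_sqrt_of_sq_le ?_ <;> nlinarith [sq_nonneg ‖x q‖, sq_nonneg ‖y q‖]

end IsLeapFrogOrbit

end LeapFrog

section SquareMatrix

variable {n : Type*} [Fintype n] [DecidableEq n] {M : Matrix n n ℝ}

theorem Matrix.transpose_cfcSqrt (M : Matrix n n ℝ) : (CFC.sqrt M)ᵀ = CFC.sqrt M := by
  rw [← conjTranspose_eq_transpose_of_trivial]
  exact (CFC.sqrt_nonneg M).posSemidef.isHermitian

theorem Matrix.PosDef.isUnit_cfcSqrt (hM : M.PosDef) : IsUnit (CFC.sqrt M) :=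
  isUnit_of_mul_isUnit_left (CFC.sqrt_mul_sqrt_self M hM.posSemidef.nonneg ▸ hM.isUnit)

theorem Matrix.PosDef.cfcSqrt_mul_inv (hM : M.PosDef) : CFC.sqrt M * M⁻¹ = (CFC.sqrt M)⁻¹ := by
  have hS := hM.isUnit_cfcSqrt
  set S := CFC.sqrt M
  rw [← CFC.sqrt_mul_sqrt_self M hM.posSemidef.nonneg, Matrix.mul_inv_rev, ← Matrix.mul_assoc,
    mul_nonsing_inv _ ((isUnit_iff_isUnit_det _).mp hS), Matrix.one_mul]

theorem Matrix.PosDef.eigenvalue_le_of_inv_cfcSqrt_conj {B : Matrix n n ℝ} (hB : B.PosDef)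
    {A : Matrix n n ℝ} {lam : ℝ}
    (hlam : ∀ (μ : ℝ) (u : n → ℝ), u ≠ 0 → A *ᵥ u = μ • (B *ᵥ u) → μ ≤ lam)
    (μ : ℝ) (v : n → ℝ) (hv : v ≠ 0) (hμ : ((CFC.sqrt B)⁻¹ * A * (CFC.sqrt B)⁻¹) *ᵥ v = μ • v) :
    μ ≤ lam := by
  have hR := (isUnit_iff_isUnit_det _).mp hB.isUnit_cfcSqrt
  set R := CFC.sqrt B
  have hRR : R * R = B := CFC.sqrt_mul_sqrt_self B hB.posSemidef.nonneg
  refine hlam μ (R⁻¹ *ᵥ v) (fun h0 => hv ?_) ?_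
  · rw [← one_mulVec v, ← mul_nonsing_inv R hR, ← mulVec_mulVec, h0, mulVec_zero]
  · calc A *ᵥ (R⁻¹ *ᵥ v) = R *ᵥ ((R⁻¹ * A * R⁻¹) *ᵥ v) := by
          rw [mulVec_mulVec, mulVec_mulVec, ← Matrix.mul_assoc, ← Matrix.mul_assoc,
            mul_nonsing_inv R hR, Matrix.one_mul]
      _ = μ • (B *ᵥ (R⁻¹ *ᵥ v)) := by
          rw [hμ, mulVec_smul, mulVec_mulVec, ← hRR, Matrix.mul_assoc, mul_nonsing_inv R hR,
            Matrix.mul_one]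

theorem Matrix.IsHermitian.dotProduct_mulVec_le {T : Matrix n n ℝ} (hT : T.IsHermitian) {lam : ℝ}
    (hlam : ∀ (μ : ℝ) (v : n → ℝ), v ≠ 0 → T *ᵥ v = μ • v → μ ≤ lam) (w : n → ℝ) :
    w ⬝ᵥ T *ᵥ w ≤ lam * (w ⬝ᵥ w) := by
  have hle : T ≤ algebraMap ℝ _ lam := by
    refine le_algebraMap_of_spectrum_le (fun μ hμ => ?_) hT
    obtain ⟨i, rfl⟩ := (hT.spectrum_real_eq_range_eigenvalues ▸ hμ : μ ∈ Set.range _)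
    refine hlam _ _ ?_ (hT.mulVec_eigenvectorBasis i)
    simpa using hT.eigenvectorBasis.orthonormal.ne_zero i
  simpa [Algebra.algebraMap_eq_smul_one, sub_mulVec, smul_mulVec] using
    (Matrix.le_iff.mp hle).dotProduct_mulVec_nonneg w

theorem Matrix.exists_norm_le_mul_norm_mulVec {A : Matrix n n ℝ} (hA : IsUnit A) :
    ∃ c, 0 ≤ c ∧ ∀ v : n → ℝ, ‖v‖ ≤ c * ‖WithLp.toLp 2 (A *ᵥ v)‖ := by
  let L : EuclideanSpace ℝ n →L[ℝ] (n → ℝ) :=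
    (toLin' A⁻¹ ∘ₗ (WithLp.linearEquiv 2 ℝ (n → ℝ)).toLinearMap).toContinuousLinearMap
  refine ⟨‖L‖, norm_nonneg _, fun v => ?_⟩
  have := L.le_opNorm (WithLp.toLp 2 (A *ᵥ v))
  simpa [L, mulVec_mulVec, nonsing_inv_mul _ ((isUnit_iff_isUnit_det A).mp hA)] using this

end SquareMatrix

section RectangularMatrix

variable {m n : Type*} [Fintype m] [Fintype n] [DecidableEq n]

theorem Matrix.norm_toEuclideanLin_le_sqrt {K : Matrix m n ℝ} {lam : ℝ}
    (hlam : ∀ (μ : ℝ) (v : n → ℝ), v ≠ 0 → (Kᵀ * K) *ᵥ v = μ • v → μ ≤ lam) :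
    ‖(toEuclideanLin K).toContinuousLinearMap‖ ≤ √lam := by
  refine ContinuousLinearMap.opNorm_le_bound _ (Real.sqrt_nonneg _) fun w => ?_
  have hsq : ‖toEuclideanLin K w‖ ^ 2 ≤ lam * ‖w‖ ^ 2 := by
    have hT : (Kᵀ * K).IsHermitian := by simpa using isHermitian_conjTranspose_mul_self K
    have key := hT.dotProduct_mulVec_le hlam (WithLp.ofLp w)
    rw [← mulVec_mulVec, dotProduct_mulVec, vecMul_transpose] at key
    simpa only [← real_inner_self_eq_norm_sq, EuclideanSpace.inner_eq_star_dotProduct,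
      star_trivial, toLpLin_apply, WithLp.ofLp_toLp] using key
  calc ‖(toEuclideanLin K).toContinuousLinearMap w‖ ≤ √(lam * ‖w‖ ^ 2) :=
        Real.le_sqrt_of_sq_le hsq
    _ = √lam * ‖w‖ := by rw [Real.sqrt_mul' _ (sq_nonneg _), Real.sqrt_sq (norm_nonneg _)]

variable [DecidableEq m]

theorem Matrix.adjoint_toEuclideanLin (K : Matrix m n ℝ) :
    (toEuclideanLin K).toContinuousLinearMap† = (toEuclideanLin Kᵀ).toContinuousLinearMap := by
  rw [← LinearMap.adjoint_toContinuousLinearMap, ← toEuclideanLin_conjTranspose_eq_adjoint,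
    conjTranspose_eq_transpose_of_trivial]

variable {Mε : Matrix m m ℝ} {Mμ : Matrix n n ℝ}

noncomputable def symmetrizedCurl (Mε : Matrix m m ℝ) (Mμ : Matrix n n ℝ) (C : Matrix n m ℝ) :
    Matrix m n ℝ :=
  (CFC.sqrt Mε)⁻¹ * Cᵀ * (CFC.sqrt Mμ)⁻¹

theorem transpose_symmetrizedCurl (C : Matrix n m ℝ) :
    (symmetrizedCurl Mε Mμ C)ᵀ = (CFC.sqrt Mμ)⁻¹ * C * (CFC.sqrt Mε)⁻¹ := by
  simp only [symmetrizedCurl, transpose_mul, transpose_nonsing_inv, transpose_cfcSqrt,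
    transpose_transpose, Matrix.mul_assoc]

theorem symmetrizedCurl_mul_cfcSqrt (hMε : Mε.PosDef) (hMμ : Mμ.PosDef) (C : Matrix n m ℝ) :
    symmetrizedCurl Mε Mμ C * CFC.sqrt Mμ = CFC.sqrt Mε * Mε⁻¹ * Cᵀ := by
  rw [symmetrizedCurl, Matrix.mul_assoc, nonsing_inv_mul _
    ((isUnit_iff_isUnit_det _).mp hMμ.isUnit_cfcSqrt), Matrix.mul_one, hMε.cfcSqrt_mul_inv]

theorem transpose_symmetrizedCurl_mul_cfcSqrt (hMε : Mε.PosDef) (hMμ : Mμ.PosDef)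
    (C : Matrix n m ℝ) :
    (symmetrizedCurl Mε Mμ C)ᵀ * CFC.sqrt Mε = CFC.sqrt Mμ * Mμ⁻¹ * C := by
  rw [transpose_symmetrizedCurl, Matrix.mul_assoc, nonsing_inv_mul _
    ((isUnit_iff_isUnit_det _).mp hMε.isUnit_cfcSqrt), Matrix.mul_one, hMμ.cfcSqrt_mul_inv]

theorem transpose_symmetrizedCurl_mul_self (hMε : Mε.PosDef) (C : Matrix n m ℝ) :
    (symmetrizedCurl Mε Mμ C)ᵀ * symmetrizedCurl Mε Mμ C
      = (CFC.sqrt Mμ)⁻¹ * (C * Mε⁻¹ * Cᵀ) * (CFC.sqrt Mμ)⁻¹ := by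
  have hinv : Mε⁻¹ = (CFC.sqrt Mε)⁻¹ * (CFC.sqrt Mε)⁻¹ := by
    rw [← Matrix.mul_inv_rev, CFC.sqrt_mul_sqrt_self Mε hMε.posSemidef.nonneg]
  rw [transpose_symmetrizedCurl, symmetrizedCurl, hinv]
  simp only [Matrix.mul_assoc]

theorem isLeapFrogOrbit_symmetrizedCurl (hMε : Mε.PosDef) (hMμ : Mμ.PosDef) {C : Matrix n m ℝ}
    {τ : ℝ} {e : ℕ → m → ℝ} {h : ℕ → n → ℝ}
    (he : ∀ q, e (q + 1) = e q + τ • (Mε⁻¹ *ᵥ (Cᵀ *ᵥ h q)))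
    (hh : ∀ q, h (q + 1) = h q - τ • (Mμ⁻¹ *ᵥ (C *ᵥ e (q + 1)))) :
    IsLeapFrogOrbit (toEuclideanLin (symmetrizedCurl Mε Mμ C)).toContinuousLinearMap τ
      (fun q => WithLp.toLp 2 (CFC.sqrt Mε *ᵥ e q))
      (fun q => WithLp.toLp 2 (CFC.sqrt Mμ *ᵥ h q)) := by
  intro q
  rw [adjoint_toEuclideanLin]
  constructor
  · simp [he q, mulVec_add, mulVec_smul, mulVec_mulVec, Matrix.mul_assoc,
      symmetrizedCurl_mul_cfcSqrt hMε hMμ]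
  · simp [hh q, mulVec_sub, mulVec_smul, mulVec_mulVec, Matrix.mul_assoc,
      transpose_symmetrizedCurl_mul_cfcSqrt hMε hMμ]

end RectangularMatrix

theorem dcm_leapfrog_cfl_stability_general
    {N Nt : ℕ}
    (Mε : Matrix (Fin N) (Fin N) ℝ) (Mμ : Matrix (Fin Nt) (Fin Nt) ℝ)
    (hMε : Mε.PosDef)
    (hMμ : Mμ.PosDef)
    (C : Matrix (Fin Nt) (Fin N) ℝ)
    (lamM : ℝ)
    -- and it is the largest one:
    (hlamM_max : ∀ (lam : ℝ) (u : Fin Nt → ℝ), u ≠ 0 →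
      (C * Mε⁻¹ * Cᵀ) *ᵥ u = lam • (Mμ *ᵥ u) → lam ≤ lamM)
    (Δt : ℝ) (hΔt : 0 < Δt) (hCFL : Δt < 2 / Real.sqrt lamM)
    -- leap-frog iterates: `e q ≈ e(q Δt)`, `h q ≈ h((q+1/2) Δt)`
    (e : ℕ → (Fin N → ℝ)) (h : ℕ → (Fin Nt → ℝ))
    (he : ∀ q, e (q + 1) = e q + Δt • (Mε⁻¹ *ᵥ (Cᵀ *ᵥ h q)))
    (hh : ∀ q, h (q + 1) = h q - Δt • (Mμ⁻¹ *ᵥ (C *ᵥ e (q + 1)))) :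
    ∃ M : ℝ, ∀ q : ℕ, ‖e q‖ + ‖h q‖ ≤ M := by
  -- `2 / 0 = 0`, so the CFL condition rules out `√lamM = 0`
  have hsqrt : 0 < √lamM := by
    by_contra! h0
    rw [le_antisymm h0 (Real.sqrt_nonneg _), div_zero] at hCFL
    linarith
  set K := (toEuclideanLin (symmetrizedCurl Mε Mμ C)).toContinuousLinearMap
  have hK : ‖K‖ ≤ √lamM := norm_toEuclideanLin_le_sqrt fun μ v hv hμ =>
    hMμ.eigenvalue_le_of_inv_cfcSqrt_conj hlamM_max μ v hv
      (transpose_symmetrizedCurl_mul_self hMε C ▸ hμ)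
  have hKCFL : Δt * ‖K‖ < 2 :=
    calc Δt * ‖K‖ ≤ Δt * √lamM := by gcongr
      _ < 2 := (lt_div_iff₀ hsqrt).mp hCFL
  obtain ⟨B, hB⟩ :=
    (isLeapFrogOrbit_symmetrizedCurl hMε hMμ he hh).exists_norm_le hΔt.le hKCFL
  obtain ⟨cε, hcε, hε⟩ := exists_norm_le_mul_norm_mulVec hMε.isUnit_cfcSqrt
  obtain ⟨cμ, hcμ, hμ⟩ := exists_norm_le_mul_norm_mulVec hMμ.isUnit_cfcSqrt
  refine ⟨cε * B + cμ * B, fun q => add_le_add ?_ ?_⟩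
  · exact (hε (e q)).trans (mul_le_mul_of_nonneg_left (hB q).1 hcε)
  · exact (hμ (h q)).trans (mul_le_mul_of_nonneg_left (hB q).2 hcμ)

/-- CFL stability of the leap-frog scheme: if `Δt < 2/√λ_M`, where `λ_M` is the
largest eigenvalue of the generalized eigenvalue problem
`C Mε⁻¹ Cᵀ u = λ Mμ u`, then every solution of the leap-frog recursion
stays bounded uniformly in the step index. -/
theorem dcm_leapfrog_cfl_stability
    {N Nt : ℕ}
    (Mε : Matrix (Fin N) (Fin N) ℝ) (Mμ : Matrix (Fin Nt) (Fin Nt) ℝ)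
    (hMε : Mε.PosDef) (hMεsymm : Mε.IsSymm)
    (hMμ : Mμ.PosDef) (hMμsymm : Mμ.IsSymm)
    (C : Matrix (Fin Nt) (Fin N) ℝ)
    (lamM : ℝ)
    -- `lamM` is an eigenvalue of the pencil:
    (hlamM_eig : ∃ u : Fin Nt → ℝ, u ≠ 0 ∧
      (C * Mε⁻¹ * Cᵀ) *ᵥ u = lamM • (Mμ *ᵥ u))
    -- and it is the largest one:
    (hlamM_max : ∀ (lam : ℝ) (u : Fin Nt → ℝ), u ≠ 0 →
      (C * Mε⁻¹ * Cᵀ) *ᵥ u = lam • (Mμ *ᵥ u) → lam ≤ lamM)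
    (Δt : ℝ) (hΔt : 0 < Δt) (hCFL : Δt < 2 / Real.sqrt lamM)
    -- leap-frog iterates: `e q ≈ e(q Δt)`, `h q ≈ h((q+1/2) Δt)`
    (e : ℕ → (Fin N → ℝ)) (h : ℕ → (Fin Nt → ℝ))
    (he : ∀ q, e (q + 1) = e q + Δt • (Mε⁻¹ *ᵥ (Cᵀ *ᵥ h q)))
    (hh : ∀ q, h (q + 1) = h q - Δt • (Mμ⁻¹ *ᵥ (C *ᵥ e (q + 1)))) :
    ∃ M : ℝ, ∀ q : ℕ, ‖e q‖ + ‖h q‖ ≤ M :=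
  dcm_leapfrog_cfl_stability_general Mε Mμ hMε hMμ C lamM hlamM_max Δt hΔt hCFL e h he hh
end

section
/- For the quantity E^q = ½ ( (e^q)ᵀ M_ε e^q + (h^{q+1/2})ᵀ M_μ h^{q−1/2} ), the leap-frog scheme e^{q+1} = e^q + Δt M_ε⁻¹ Cᵀ h^{q+1/2}, h^{q+1/2} = h^{q−1/2} − Δt M_μ⁻¹ C e^q satisfies E^{q+1} = E^q for all q, i.e., the modified discrete energy is exactly conserved. -/
open Matrix

lemma dcm_aux_cancel {n : ℕ} {M : Matrix (Fin n) (Fin n) ℝ} (hM : M.PosDef)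
    (x : Fin n → ℝ) : M *ᵥ (M⁻¹ *ᵥ x) = x := by
  rw [mulVec_mulVec, Matrix.mul_nonsing_inv _ (isUnit_iff_ne_zero.mpr hM.det_pos.ne'),
    one_mulVec]

lemma dcm_aux_symswap {n : ℕ} {M : Matrix (Fin n) (Fin n) ℝ} (hM : M.IsSymm)
    (x y : Fin n → ℝ) : x ⬝ᵥ (M *ᵥ y) = y ⬝ᵥ (M *ᵥ x) := by
  rw [dotProduct_mulVec, ← mulVec_transpose, hM.eq, dotProduct_comm]

lemma dcm_aux_transp {m n : ℕ} (C : Matrix (Fin m) (Fin n) ℝ)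
    (x : Fin n → ℝ) (y : Fin m → ℝ) : x ⬝ᵥ (Cᵀ *ᵥ y) = (C *ᵥ x) ⬝ᵥ y := by
  rw [dotProduct_mulVec, vecMul_transpose]

/-- Exact conservation of the modified discrete energy
`E^q = ½ ((e^q)ᵀ Mε e^q + (h^{q+1/2})ᵀ Mμ h^{q-1/2})` by the leap-frog scheme.
Here `h q` denotes the magnetic iterate `h^{q+1/2}`, so that
`E^{q+1} = ½ ((e^{q+1})ᵀ Mε e^{q+1} + (h (q+1))ᵀ Mμ (h q))`. -/
theorem dcm_leapfrog_modified_energy_conservation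
    {N Nt : ℕ}
    (Mε : Matrix (Fin N) (Fin N) ℝ) (Mμ : Matrix (Fin Nt) (Fin Nt) ℝ)
    (hMε : Mε.PosDef) (hMεsymm : Mε.IsSymm)
    (hMμ : Mμ.PosDef) (hMμsymm : Mμ.IsSymm)
    (C : Matrix (Fin Nt) (Fin N) ℝ)
    (Δt : ℝ) (hΔt : 0 < Δt)
    (e : ℕ → (Fin N → ℝ)) (h : ℕ → (Fin Nt → ℝ))
    (he : ∀ q, e (q + 1) = e q + Δt • (Mε⁻¹ *ᵥ (Cᵀ *ᵥ h q)))
    (hh : ∀ q, h (q + 1) = h q - Δt • (Mμ⁻¹ *ᵥ (C *ᵥ e (q + 1)))) :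
    ∀ q : ℕ,
      (1 / 2) * (e (q + 2) ⬝ᵥ (Mε *ᵥ e (q + 2)) + h (q + 2) ⬝ᵥ (Mμ *ᵥ h (q + 1))) =
      (1 / 2) * (e (q + 1) ⬝ᵥ (Mε *ᵥ e (q + 1)) + h (q + 1) ⬝ᵥ (Mμ *ᵥ h q)) := by
  intro q
  set a := e (q + 1) with ha
  set b := h (q + 1) with hb
  set a2 := e (q + 2) with ha2
  -- e (q+2) = a + Δt • Mε⁻¹ Cᵀ b
  have hE : a2 = a + Δt • (Mε⁻¹ *ᵥ (Cᵀ *ᵥ b)) := he (q + 1)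
  have hH2 : h (q + 2) = b - Δt • (Mμ⁻¹ *ᵥ (C *ᵥ a2)) := hh (q + 1)
  -- h q = b + Δt • Mμ⁻¹ C a
  have hHq : h q = b + Δt • (Mμ⁻¹ *ᵥ (C *ᵥ a)) := by
    rw [hb, hh q]
    abel
  -- key 1
  have key1 : a2 ⬝ᵥ (Mε *ᵥ a2)
      = a ⬝ᵥ (Mε *ᵥ a) + Δt * (a ⬝ᵥ (Cᵀ *ᵥ b)) + Δt * (a2 ⬝ᵥ (Cᵀ *ᵥ b)) := by
    have hMe2 : Mε *ᵥ a2 = Mε *ᵥ a + Δt • (Cᵀ *ᵥ b) := by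
      rw [hE, mulVec_add, mulVec_smul, dcm_aux_cancel hMε]
    have h1 : a2 ⬝ᵥ (Mε *ᵥ a) = a ⬝ᵥ (Mε *ᵥ a) + Δt * (a ⬝ᵥ (Cᵀ *ᵥ b)) := by
      rw [dcm_aux_symswap hMεsymm a2 a, hMe2, dotProduct_add, dotProduct_smul, smul_eq_mul]
    rw [hMe2, dotProduct_add, dotProduct_smul, smul_eq_mul, h1]
  -- key 2
  have key2 : h (q + 2) ⬝ᵥ (Mμ *ᵥ b)
      = b ⬝ᵥ (Mμ *ᵥ b) - Δt * (a2 ⬝ᵥ (Cᵀ *ᵥ b)) := by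
    rw [hH2, sub_dotProduct, smul_dotProduct, smul_eq_mul]
    congr 1
    congr 1
    rw [dcm_aux_symswap hMμsymm, dcm_aux_cancel hMμ, dcm_aux_transp, dotProduct_comm]
  -- key 3
  have key3 : b ⬝ᵥ (Mμ *ᵥ h q)
      = b ⬝ᵥ (Mμ *ᵥ b) + Δt * (a ⬝ᵥ (Cᵀ *ᵥ b)) := by
    rw [hHq, mulVec_add, mulVec_smul, dcm_aux_cancel hMμ, dotProduct_add,
      dotProduct_smul, smul_eq_mul, dcm_aux_transp, dotProduct_comm b (C *ᵥ a)]
  rw [key1, key2, key3]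
  ring
end

section
/- Let e₀ : ℝ → ℝ be continuous with e₀(t) = 0 for t < 0, and fix x > 0 and κ = π/l_y > 0. Define e(t,x) = e₀(t−x) − κ x ∫_x^t e₀(t−τ) · J₁(κ√(τ²−x²)) / √(τ²−x²) dτ for t ≥ x and e(t,x) = 0 for t < x, where J₁ is the Bessel function of the first kind of order one. If e₀ is C², then e satisfies ∂_t² e = ∂_x² e − κ² e for t > x together with e(t,0) = e₀(t). -/
open Real intervalIntegral

/-- The Bessel function of the first kind of order one, via its power series
`J₁(z) = Σ_{m≥0} (−1)^m / (m! (m+1)!) (z/2)^{2m+1}`. -/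
noncomputable def besselJ1 (z : ℝ) : ℝ :=
  ∑' m : ℕ, (-1) ^ m / ((m.factorial : ℝ) * ((m + 1).factorial : ℝ))
      * (z / 2) ^ (2 * m + 1)

/-- The semi-analytic waveguide reference solution
`e(t,x) = e₀(t−x) − κ x ∫_x^t e₀(t−τ) J₁(κ√(τ²−x²))/√(τ²−x²) dτ` for `t ≥ x`
and `e(t,x) = 0` for `t < x`. -/
noncomputable def refSol (e₀ : ℝ → ℝ) (κ : ℝ) (t x : ℝ) : ℝ :=
  if x ≤ t then
    e₀ (t - x) - κ * x *
      ∫ τ in x..t, e₀ (t - τ) * besselJ1 (κ * Real.sqrt (τ ^ 2 - x ^ 2))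
        / Real.sqrt (τ ^ 2 - x ^ 2)
  else 0

/-!
Writing `J₁(z) = (z/2) G(z²/4)` with the entire function `G(u) = Σ (-1)^m u^m / (m! (m+1)!)`, the
kernel `J₁(κ√(τ²-x²))/√(τ²-x²)` becomes `(κ/2) G(κ²(τ²-x²)/4)`, so on `0 ≤ x ≤ t` the solution
agrees with an expression that is smooth in `(t, x)` on the whole plane. Its time derivatives fall
on `e₀` alone (the boundary terms vanish because `e₀(0) = e₀'(0) = 0`), and two integrations by
parts move them onto the kernel; the Bessel-type equation `u G'' + 2G' + G = 0` then identifies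
the result with `∂ₓ²e - κ²e`.
-/

open MeasureTheory Set Function Topology

noncomputable section

section PowerSeries

def seriesSum (b : ℕ → ℝ) (v : ℝ) : ℝ := ∑' m, b m * v ^ m

def derivCoeff (b : ℕ → ℝ) (m : ℕ) : ℝ := (m + 1) * b (m + 1)

def HasInfiniteRadius (b : ℕ → ℝ) : Prop := ∀ r : ℝ, Summable fun m => b m * r ^ m

variable {b : ℕ → ℝ}

theorem hasInfiniteRadius_derivCoeff (hb : HasInfiniteRadius b) :
    HasInfiniteRadius (derivCoeff b) := by
  intro r
  set R := |r| + 1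
  have hR : 1 ≤ R := by simp [R]
  have hsum : Summable fun m => |b (m + 1) * (2 * R) ^ (m + 1)| :=
    (summable_nat_add_iff 1).2 (hb (2 * R)).abs
  refine hsum.of_norm_bounded fun m => ?_
  have h2 : ((m : ℝ) + 1) ≤ 2 ^ (m + 1) := by
    exact_mod_cast (Nat.lt_two_pow_self (n := m + 1)).le
  have hr : |r| ^ m ≤ R ^ (m + 1) :=
    (pow_le_pow_left₀ (abs_nonneg r) (by simp [R]) m).trans (pow_le_pow_right₀ hR m.le_succ)
  rw [Real.norm_eq_abs, derivCoeff, abs_mul, abs_mul, abs_mul, abs_pow, abs_pow,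
    abs_of_nonneg (by positivity : (0 : ℝ) ≤ m + 1),
    abs_of_nonneg (by positivity : (0 : ℝ) ≤ 2 * R), mul_pow]
  calc ((m : ℝ) + 1) * |b (m + 1)| * |r| ^ m ≤ 2 ^ (m + 1) * |b (m + 1)| * R ^ (m + 1) := by
        gcongr
    _ = _ := by ring

theorem HasInfiniteRadius.hasDerivAt (hb : HasInfiniteRadius b) (v : ℝ) :
    HasDerivAt (seriesSum b) (seriesSum (derivCoeff b) v) v := by
  set R := |v| + 1
  have hv : v ∈ Metric.ball (0 : ℝ) R := by simp [R]
  have hbound : Summable fun n => |b n| * (n * R ^ (n - 1)) := by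
    refine (summable_nat_add_iff 1).1
      ((hasInfiniteRadius_derivCoeff hb R).abs.congr fun m => ?_)
    simp only [derivCoeff, abs_mul, abs_pow, Nat.cast_add, Nat.cast_one,
      Nat.add_sub_cancel, abs_of_nonneg (by positivity : (0 : ℝ) ≤ m + 1),
      abs_of_nonneg (by positivity : (0 : ℝ) ≤ R)]
    ring
  have hderiv := hasDerivAt_tsum_of_isPreconnected hbound Metric.isOpen_ball
    (convex_ball (0 : ℝ) R).isPreconnected
    (fun n y _ => (hasDerivAt_pow n y).const_mul (b n)) (fun n y hy => ?_) hv (hb v) hv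
  · refine hderiv.congr_deriv ?_
    rw [tsum_eq_zero_add' ?_]
    · simp [seriesSum, derivCoeff, mul_left_comm, mul_comm]
    · simpa [derivCoeff, mul_left_comm, mul_comm] using hasInfiniteRadius_derivCoeff hb v
  · have hy' : |y| ≤ R := by simpa using (Metric.mem_ball.1 hy).le
    rw [norm_mul, norm_mul, norm_pow, Real.norm_eq_abs, Real.norm_eq_abs, Real.norm_eq_abs,
      Nat.abs_cast]
    gcongr

theorem seriesSum_zero (b : ℕ → ℝ) : seriesSum b 0 = b 0 := by
  rw [seriesSum, tsum_eq_single 0 fun m hm => by simp [hm]]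
  simp

theorem HasInfiniteRadius.hasSum_mul_derivCoeff (hb : HasInfiniteRadius b) (v : ℝ) :
    HasSum (fun m => m * b m * v ^ m) (v * seriesSum (derivCoeff b) v) := by
  refine (hasSum_nat_add_iff' 1).1 ?_
  simpa [seriesSum, derivCoeff, pow_succ, mul_comm, mul_left_comm, mul_assoc]
    using ((hasInfiniteRadius_derivCoeff hb v).hasSum.mul_left v)

end PowerSeries

def besselCoeff (m : ℕ) : ℝ := (-1) ^ m / ((m.factorial : ℝ) * ((m + 1).factorial : ℝ))

/-- `besselG k` is the `k`-th derivative of the entire function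
`G(u) = Σ (-1)^m u^m / (m! (m+1)!)`, for which `J₁(z) = (z/2) G(z²/4)`. -/
def besselG (k : ℕ) : ℝ → ℝ := seriesSum (derivCoeff^[k] besselCoeff)

theorem hasInfiniteRadius_besselCoeff : HasInfiniteRadius besselCoeff := by
  intro r
  refine (Real.summable_pow_div_factorial |r|).of_norm_bounded fun m => ?_
  have hfac : (1 : ℝ) ≤ (m + 1).factorial := mod_cast (m + 1).factorial_pos
  rw [besselCoeff, Real.norm_eq_abs, abs_mul, abs_div, abs_mul, abs_pow, abs_pow, abs_neg, abs_one,
    one_pow, Nat.abs_cast, Nat.abs_cast, div_mul_eq_mul_div, one_mul]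
  gcongr
  exact le_mul_of_one_le_right (by positivity) hfac

theorem hasInfiniteRadius_iterate_derivCoeff (k : ℕ) :
    HasInfiniteRadius (derivCoeff^[k] besselCoeff) := by
  induction k with
  | zero => exact hasInfiniteRadius_besselCoeff
  | succ k ih =>
    rw [Function.iterate_succ_apply']
    exact hasInfiniteRadius_derivCoeff ih

theorem hasDerivAt_besselG (k : ℕ) (v : ℝ) : HasDerivAt (besselG k) (besselG (k + 1) v) v := by
  rw [besselG, besselG, Function.iterate_succ_apply']
  exact (hasInfiniteRadius_iterate_derivCoeff k).hasDerivAt v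

theorem continuous_besselG (k : ℕ) : Continuous (besselG k) :=
  continuous_iff_continuousAt.2 fun v => (hasDerivAt_besselG k v).continuousAt

theorem besselG_zero_zero : besselG 0 0 = 1 := by
  simp [besselG, seriesSum_zero, besselCoeff]

theorem besselG_one_zero : besselG 1 0 = -1 / 2 := by
  norm_num [besselG, seriesSum_zero, derivCoeff, besselCoeff, Nat.factorial]

theorem besselCoeff_succ (k : ℕ) :
    ((k : ℝ) + 1) * (k + 2) * besselCoeff (k + 1) = -besselCoeff k := by
  simp only [besselCoeff, Nat.factorial_succ, Nat.cast_mul, pow_succ]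
  push_cast
  field_simp
  ring

theorem besselG_ode (v : ℝ) : v * besselG 2 v + 2 * besselG 1 v + besselG 0 v = 0 := by
  have h0 := (hasInfiniteRadius_besselCoeff v).hasSum
  have h1 := ((hasInfiniteRadius_derivCoeff hasInfiniteRadius_besselCoeff) v).hasSum.mul_left 2
  have h2 := (hasInfiniteRadius_derivCoeff hasInfiniteRadius_besselCoeff).hasSum_mul_derivCoeff v
  refine (h2.add h1 |>.add h0).unique ?_
  convert hasSum_zero with m
  simp only [derivCoeff]
  linear_combination (v ^ m) * besselCoeff_succ m

theorem besselJ1_eq (z : ℝ) : besselJ1 z = z / 2 * besselG 0 (z ^ 2 / 4) := by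
  rw [besselJ1, besselG, seriesSum, ← tsum_mul_left]
  refine tsum_congr fun m => ?_
  rw [Function.iterate_zero_apply, besselCoeff, pow_succ, pow_mul, div_pow z 2 2]
  ring

theorem hasDerivAt_intervalIntegral_of_continuous {h h' : ℝ → ℝ → ℝ}
    (hh : Continuous (uncurry h)) (hh' : Continuous (uncurry h'))
    (hd : ∀ τ y, HasDerivAt (h τ) (h' τ y) y) (a b y₀ : ℝ) :
    HasDerivAt (fun y => ∫ τ in a..b, h τ y) (∫ τ in a..b, h' τ y₀) y₀ := by
  have hslice : ∀ {k : ℝ → ℝ → ℝ}, Continuous (uncurry k) → ∀ y, Continuous fun τ => k τ y :=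
    fun hk y => hk.comp (continuous_id.prodMk continuous_const)
  obtain ⟨C, hC⟩ := (isCompact_uIcc.prod (isCompact_closedBall y₀ 1)).exists_bound_of_continuousOn
    hh'.continuousOn
  refine (hasDerivAt_integral_of_dominated_loc_of_deriv_le (μ := volume)
    (F := fun y τ => h τ y) (F' := fun y τ => h' τ y) (bound := fun _ => C)
    (Metric.ball_mem_nhds y₀ one_pos) ?_ ?_ ?_ ?_ (continuous_const.intervalIntegrable a b) ?_).2
  · exact .of_forall fun y => (hslice hh y).aestronglyMeasurable
  · exact (hslice hh y₀).intervalIntegrable a b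
  · exact (hslice hh' y₀).aestronglyMeasurable
  · exact .of_forall fun τ hτ y hy =>
      hC (τ, y) ⟨uIoc_subset_uIcc hτ, Metric.ball_subset_closedBall hy⟩
  · exact .of_forall fun τ _ y _ => hd τ y

theorem hasDerivAt_intervalIntegral_diag {h : ℝ → ℝ → ℝ} (hh : Continuous (uncurry h))
    (y₀ : ℝ) :
    HasDerivAt (fun y => ∫ τ in y₀..y, h τ y) (h y₀ y₀) y₀ := by
  rw [hasDerivAt_iff_isLittleO, Asymptotics.isLittleO_iff]
  intro ε hε
  obtain ⟨δ, hδ, hcont⟩ := Metric.continuousAt_iff.1 (hh.continuousAt (x := (y₀, y₀))) ε hε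
  filter_upwards [Metric.ball_mem_nhds y₀ hδ] with y hy
  have hint : IntervalIntegrable (fun τ => h τ y) volume y₀ y :=
    (hh.comp (continuous_id.prodMk continuous_const)).intervalIntegrable _ _
  rw [integral_same, sub_zero, ← intervalIntegral.integral_const,
    ← integral_sub hint (continuous_const.intervalIntegrable _ _)]
  rw [Real.norm_eq_abs (y - y₀)]
  refine intervalIntegral.norm_integral_le_of_norm_le_const fun τ hτ => ?_
  have hτy : dist (τ, y) (y₀, y₀) < δ := by
    have hτ' : dist τ y₀ ≤ dist y y₀ := abs_sub_left_of_mem_uIcc (uIoc_subset_uIcc hτ)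
    rw [Prod.dist_eq]
    exact max_lt (hτ'.trans_lt hy) hy
  simpa [dist_eq_norm] using (hcont hτy).le

theorem hasDerivAt_intervalIntegral_upper_param {h h' : ℝ → ℝ → ℝ}
    (hh : Continuous (uncurry h)) (hh' : Continuous (uncurry h'))
    (hd : ∀ τ y, HasDerivAt (h τ) (h' τ y) y) (a y₀ : ℝ) :
    HasDerivAt (fun y => ∫ τ in a..y, h τ y) (h y₀ y₀ + ∫ τ in a..y₀, h' τ y₀) y₀ := by
  have hsplit : (fun y => ∫ τ in a..y, h τ y)
      = fun y => (∫ τ in y₀..y, h τ y) + ∫ τ in a..y₀, h τ y := by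
    funext y
    have hint : ∀ c d, IntervalIntegrable (fun τ => h τ y) volume c d := fun c d =>
      (hh.comp (continuous_id.prodMk continuous_const)).intervalIntegrable c d
    rw [add_comm, integral_add_adjacent_intervals (hint a y₀) (hint y₀ y)]
  rw [hsplit]
  exact (hasDerivAt_intervalIntegral_diag hh y₀).add
    (hasDerivAt_intervalIntegral_of_continuous hh hh' hd a y₀ y₀)

theorem hasDerivAt_integral_comp_sub_mul {f K : ℝ → ℝ} (hf : ContDiff ℝ 1 f) (hf0 : f 0 = 0)
    (hK : Continuous K) (a s : ℝ) :
    HasDerivAt (fun s => ∫ τ in a..s, f (s - τ) * K τ)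
      (∫ τ in a..s, deriv f (s - τ) * K τ) s := by
  have hd : ∀ τ s, HasDerivAt (fun s => f (s - τ) * K τ) (deriv f (s - τ) * K τ) s :=
    fun τ s =>
    (((hf.differentiable one_ne_zero) _).hasDerivAt.comp_sub_const s τ).mul_const _
  have h := hasDerivAt_intervalIntegral_upper_param (h := fun τ s => f (s - τ) * K τ)
    (by fun_prop) ((hf.continuous_deriv le_rfl).comp (by fun_prop) |>.mul (by fun_prop)) hd a s
  simpa [hf0] using h

theorem integral_deriv_comp_sub_mul {g u u' : ℝ → ℝ} (hg : ContDiff ℝ 1 g)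
    (hu : ∀ τ, HasDerivAt u (u' τ) τ) (hu' : Continuous u') (x t : ℝ) :
    ∫ τ in x..t, deriv g (t - τ) * u τ
      = g (t - x) * u x - g 0 * u t + ∫ τ in x..t, g (t - τ) * u' τ := by
  have hv : ∀ τ, HasDerivAt (fun τ => -g (t - τ)) (deriv g (t - τ)) τ := fun τ =>
    (((hg.differentiable one_ne_zero) _).hasDerivAt.comp_const_sub t τ).neg.congr_deriv
      (neg_neg _)
  have h := integral_mul_deriv_eq_deriv_mul (fun τ _ => hu τ) (fun τ _ => hv τ)
    (hu'.intervalIntegrable x t)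
    (((hg.continuous_deriv le_rfl).comp (by fun_prop)).intervalIntegrable x t)
  simp only [mul_comm (deriv g _) (u _)]
  rw [h]
  simp only [sub_self, mul_neg, mul_comm (u' _), neg_mul]
  rw [intervalIntegral.integral_neg]
  ring

theorem apply_zero_of_forall_lt_zero {f : ℝ → ℝ} (hf : Continuous f) (h : ∀ t < 0, f t = 0) :
    f 0 = 0 := by
  have : closure (Iio (0 : ℝ)) ⊆ {t | f t = 0} :=
    (isClosed_eq hf continuous_const).closure_subset_iff.2 h
  exact this (by simp)

theorem deriv_eq_zero_of_forall_lt_zero {f : ℝ → ℝ} (h : ∀ t < 0, f t = 0) {t : ℝ}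
    (ht : t < 0) : deriv f t = 0 := by
  rw [(Filter.eventuallyEq_of_mem (Iio_mem_nhds ht) h).deriv_eq, deriv_const]

def besselIntegral (k : ℕ) (f : ℝ → ℝ) (κ t x : ℝ) : ℝ :=
  ∫ τ in x..t, f (t - τ) * besselG k (κ ^ 2 / 4 * (τ ^ 2 - x ^ 2))

/-- `refSol` with its kernel rewritten through `besselG`, which makes it smooth on the whole
plane. -/
def smoothRefSol (f : ℝ → ℝ) (κ t x : ℝ) : ℝ :=
  f (t - x) - κ ^ 2 * x / 2 * besselIntegral 0 f κ t x

theorem refSol_eq_smoothRefSol (e₀ : ℝ → ℝ) (κ : ℝ) {t x : ℝ} (hx : 0 ≤ x) (hxt : x ≤ t) :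
    refSol e₀ κ t x = smoothRefSol e₀ κ t x := by
  have hintegrand : ∀ τ ∈ Ioc x t,
      e₀ (t - τ) * besselJ1 (κ * √(τ ^ 2 - x ^ 2)) / √(τ ^ 2 - x ^ 2)
        = κ / 2 * (e₀ (t - τ) * besselG 0 (κ ^ 2 / 4 * (τ ^ 2 - x ^ 2))) := fun τ hτ => by
    have hpos : 0 < τ ^ 2 - x ^ 2 := by nlinarith [hτ.1]
    rw [besselJ1_eq, mul_pow, sq_sqrt hpos.le]
    field_simp [(sqrt_pos.2 hpos).ne']
  rw [refSol, if_pos hxt, smoothRefSol, besselIntegral, integral_of_le hxt, integral_of_le hxt,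
    setIntegral_congr_fun measurableSet_Ioc hintegrand, MeasureTheory.integral_const_mul]
  ring

theorem hasDerivAt_smoothRefSol_time {f : ℝ → ℝ} (hf : ContDiff ℝ 1 f) (hf0 : f 0 = 0)
    (κ x s : ℝ) :
    HasDerivAt (fun s => smoothRefSol f κ s x) (smoothRefSol (deriv f) κ s x) s :=
  (((hf.differentiable one_ne_zero) _).hasDerivAt.comp_sub_const s x).sub
    ((hasDerivAt_integral_comp_sub_mul hf hf0 ((continuous_besselG 0).comp (by fun_prop)) x
      s).const_mul (κ ^ 2 * x / 2))

theorem deriv_deriv_smoothRefSol_time {f : ℝ → ℝ} (hf : ContDiff ℝ 2 f) (hf0 : f 0 = 0)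
    (hf0' : deriv f 0 = 0) (κ t x : ℝ) :
    deriv (deriv fun s => smoothRefSol f κ s x) t = smoothRefSol (deriv (deriv f)) κ t x := by
  have h1 : deriv (fun s => smoothRefSol f κ s x) = fun s => smoothRefSol (deriv f) κ s x :=
    funext fun s => (hasDerivAt_smoothRefSol_time (hf.of_le one_le_two) hf0 κ x s).deriv
  rw [h1]
  exact (hasDerivAt_smoothRefSol_time hf.deriv' hf0' κ x t).deriv

theorem hasDerivAt_besselIntegral_space {f : ℝ → ℝ} (hf : Continuous f) (k : ℕ) (κ t y : ℝ) :
    HasDerivAt (besselIntegral k f κ t)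
      (-(f (t - y) * besselG k 0) - κ ^ 2 / 2 * y * besselIntegral (k + 1) f κ t y) y := by
  have hd : ∀ τ y, HasDerivAt (fun y => f (t - τ) * besselG k (κ ^ 2 / 4 * (τ ^ 2 - y ^ 2)))
      (f (t - τ) * besselG (k + 1) (κ ^ 2 / 4 * (τ ^ 2 - y ^ 2)) * (-(κ ^ 2 / 2 * y))) y :=
    fun τ y => by
      have hq : HasDerivAt (fun y => κ ^ 2 / 4 * (τ ^ 2 - y ^ 2)) (-(κ ^ 2 / 2 * y)) y := by
        refine (((hasDerivAt_pow 2 y).const_sub (τ ^ 2)).const_mul (κ ^ 2 / 4)).congr_deriv ?_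
        norm_num
        ring
      simpa [mul_assoc] using ((hasDerivAt_besselG k _).comp y hq).const_mul (f (t - τ))
  have hG := continuous_besselG k
  have hG' := continuous_besselG (k + 1)
  have h := (hasDerivAt_intervalIntegral_upper_param (by fun_prop) (by fun_prop) hd t y).neg
  have hsymm : besselIntegral k f κ t = fun y =>
      -∫ τ in t..y, f (t - τ) * besselG k (κ ^ 2 / 4 * (τ ^ 2 - y ^ 2)) := by
    funext y
    rw [besselIntegral, integral_symm]
  rw [hsymm]
  refine h.congr_deriv ?_
  rw [sub_self, mul_zero, intervalIntegral.integral_mul_const, besselIntegral, integral_symm t y]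
  ring

theorem hasDerivAt_besselG_comp_sq (k : ℕ) (κ a τ : ℝ) :
    HasDerivAt (fun τ => besselG k (κ ^ 2 / 4 * (τ ^ 2 - a)))
      (besselG (k + 1) (κ ^ 2 / 4 * (τ ^ 2 - a)) * (κ ^ 2 / 2 * τ)) τ := by
  refine (hasDerivAt_besselG k _).comp τ
    ((((hasDerivAt_pow 2 τ).sub_const a).const_mul (κ ^ 2 / 4)).congr_deriv ?_)
  norm_num
  ring

theorem besselIntegral_deriv_deriv {f : ℝ → ℝ} (hf : ContDiff ℝ 2 f) (hf0 : f 0 = 0)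
    (hf0' : deriv f 0 = 0) (κ t x : ℝ) :
    besselIntegral 0 (deriv (deriv f)) κ t x
      = deriv f (t - x) - κ ^ 2 * x / 4 * f (t - x) - 3 * κ ^ 2 / 2 * besselIntegral 1 f κ t x
        - κ ^ 2 * besselIntegral 0 f κ t x + κ ^ 4 * x ^ 2 / 4 * besselIntegral 2 f κ t x := by
  set G : ℕ → ℝ → ℝ := fun k τ => besselG k (κ ^ 2 / 4 * (τ ^ 2 - x ^ 2)) with hGdef
  have hGcont : ∀ k, Continuous (G k) := fun k => (continuous_besselG k).comp (by fun_prop)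
  have hG : ∀ k τ, HasDerivAt (G k) (G (k + 1) τ * (κ ^ 2 / 2 * τ)) τ := fun k τ =>
    hasDerivAt_besselG_comp_sq k κ (x ^ 2) τ
  have hG1 : ∀ τ, HasDerivAt (fun τ => G 1 τ * (κ ^ 2 / 2 * τ))
      (G 2 τ * (κ ^ 2 / 2 * τ) ^ 2 + G 1 τ * (κ ^ 2 / 2)) τ := fun τ => by
    refine ((hG 1 τ).mul ((hasDerivAt_id τ).const_mul (κ ^ 2 / 2))).congr_deriv ?_
    simp only [id, Nat.reduceAdd]
    ring
  have hode : ∀ τ, G 2 τ * (κ ^ 2 / 2 * τ) ^ 2 + G 1 τ * (κ ^ 2 / 2)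
      = -(3 * κ ^ 2 / 2) * G 1 τ - κ ^ 2 * G 0 τ + κ ^ 4 * x ^ 2 / 4 * G 2 τ := fun τ => by
    linear_combination κ ^ 2 * besselG_ode (κ ^ 2 / 4 * (τ ^ 2 - x ^ 2))
  have hint : ∀ k, IntervalIntegrable (fun τ => f (t - τ) * G k τ) volume x t := fun k =>
    ((hf.continuous.comp (by fun_prop)).mul (hGcont k)).intervalIntegrable x t
  have hsplit : ∫ τ in x..t, f (t - τ) * (G 2 τ * (κ ^ 2 / 2 * τ) ^ 2 + G 1 τ * (κ ^ 2 / 2))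
      = -(3 * κ ^ 2 / 2) * besselIntegral 1 f κ t x - κ ^ 2 * besselIntegral 0 f κ t x
        + κ ^ 4 * x ^ 2 / 4 * besselIntegral 2 f κ t x := by
    simp only [hode, mul_add, mul_sub, mul_left_comm (f _)]
    rw [integral_add ((hint 1).const_mul _ |>.sub ((hint 0).const_mul _))
        ((hint 2).const_mul _),
      integral_sub ((hint 1).const_mul _) ((hint 0).const_mul _),
      intervalIntegral.integral_const_mul, intervalIntegral.integral_const_mul,
      intervalIntegral.integral_const_mul]
    rfl
  rw [besselIntegral,
    integral_deriv_comp_sub_mul hf.deriv' (hG 0) ((hGcont 1).mul (by fun_prop)),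
    integral_deriv_comp_sub_mul (hf.of_le one_le_two) hG1 (by fun_prop), hsplit]
  simp only [hGdef, sub_self, mul_zero, besselG_zero_zero, besselG_one_zero, hf0, hf0']
  ring

theorem smoothRefSol_kleinGordon {f : ℝ → ℝ} (hf : ContDiff ℝ 2 f) (hf0 : f 0 = 0)
    (hf0' : deriv f 0 = 0) (κ t x : ℝ) :
    deriv (deriv fun s => smoothRefSol f κ s x) t
      = deriv (deriv fun y => smoothRefSol f κ t y) x - κ ^ 2 * smoothRefSol f κ t x := by
  have hV : ∀ k y, HasDerivAt (besselIntegral k f κ t)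
      (-(f (t - y) * besselG k 0) - κ ^ 2 / 2 * y * besselIntegral (k + 1) f κ t y) y :=
    fun k y => hasDerivAt_besselIntegral_space hf.continuous k κ t y
  have hshift : ∀ {g : ℝ → ℝ}, ContDiff ℝ 1 g → ∀ y,
      HasDerivAt (fun y => g (t - y)) (-deriv g (t - y)) y := fun hg y =>
    ((hg.differentiable one_ne_zero) _).hasDerivAt.comp_const_sub t y
  have hlin : ∀ y, HasDerivAt (fun y => κ ^ 2 * y / 2) (κ ^ 2 / 2) y := fun y =>
    (((hasDerivAt_id y).const_mul (κ ^ 2)).div_const 2).congr_deriv (by simp)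
  have hx1 : ∀ y, HasDerivAt (fun y => smoothRefSol f κ t y)
      (-deriv f (t - y) - κ ^ 2 / 2 * besselIntegral 0 f κ t y
        + κ ^ 2 * y / 2 * (f (t - y) + κ ^ 2 * y / 2 * besselIntegral 1 f κ t y)) y := fun y =>
    ((hshift (hf.of_le one_le_two) y).sub ((hlin y).mul (hV 0 y))).congr_deriv
      (by rw [besselG_zero_zero]; ring)
  have hx2 : HasDerivAt (fun y => -deriv f (t - y) - κ ^ 2 / 2 * besselIntegral 0 f κ t y
        + κ ^ 2 * y / 2 * (f (t - y) + κ ^ 2 * y / 2 * besselIntegral 1 f κ t y)) _ x :=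
    (((hshift hf.deriv' x).neg).sub ((hV 0 x).const_mul _)).add
      ((hlin x).mul ((hshift (hf.of_le one_le_two) x).add ((hlin x).mul (hV 1 x))))
  rw [deriv_deriv_smoothRefSol_time hf hf0 hf0', funext fun y => (hx1 y).deriv, hx2.deriv,
    smoothRefSol, smoothRefSol, besselIntegral_deriv_deriv hf hf0 hf0', besselG_zero_zero,
    besselG_one_zero]
  ring

end

theorem refSol_solves_dispersive_wave_general
    (e₀ : ℝ → ℝ) (hC2 : ContDiff ℝ 2 e₀)
    (hzero : ∀ t < (0 : ℝ), e₀ t = 0)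
    (κ : ℝ) :
    (∀ x : ℝ, 0 < x → ∀ t : ℝ, x < t →
      deriv (deriv (fun s => refSol e₀ κ s x)) t
        = deriv (deriv (fun y => refSol e₀ κ t y)) x - κ ^ 2 * refSol e₀ κ t x) ∧
    (∀ t : ℝ, refSol e₀ κ t 0 = e₀ t) := by
  have he₀ : e₀ 0 = 0 := apply_zero_of_forall_lt_zero hC2.continuous hzero
  have he₀' : deriv e₀ 0 = 0 := apply_zero_of_forall_lt_zero (hC2.continuous_deriv one_le_two)
    fun t ht => deriv_eq_zero_of_forall_lt_zero hzero ht
  refine ⟨fun x hx t hxt => ?_, fun t => ?_⟩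
  · have htime : (fun s => refSol e₀ κ s x) =ᶠ[𝓝 t] fun s => smoothRefSol e₀ κ s x :=
      eventually_gt_nhds hxt |>.mono fun s hs => refSol_eq_smoothRefSol e₀ κ hx.le hs.le
    have hspace : (fun y => refSol e₀ κ t y) =ᶠ[𝓝 x] fun y => smoothRefSol e₀ κ t y :=
      (eventually_gt_nhds hx).and (eventually_lt_nhds hxt) |>.mono fun y hy =>
        refSol_eq_smoothRefSol e₀ κ hy.1.le hy.2.le
    rw [htime.deriv.deriv_eq, hspace.deriv.deriv_eq, refSol_eq_smoothRefSol e₀ κ hx.le hxt.le]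
    exact smoothRefSol_kleinGordon hC2 he₀ he₀' κ t x
  · by_cases ht : 0 ≤ t
    · simp [refSol, ht]
    · simp [refSol, ht, hzero t (not_le.1 ht)]

/-- The reference solution satisfies the dispersive wave (Klein--Gordon)
equation `∂ₜ²e = ∂ₓ²e − κ²e` for `t > x > 0`, together with the boundary
condition `e(t,0) = e₀(t)`. -/
theorem refSol_solves_dispersive_wave
    (e₀ : ℝ → ℝ) (hcont : Continuous e₀) (hC2 : ContDiff ℝ 2 e₀)
    (hzero : ∀ t < (0 : ℝ), e₀ t = 0)
    (κ : ℝ) (hκ : 0 < κ) :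
    (∀ x : ℝ, 0 < x → ∀ t : ℝ, x < t →
      deriv (deriv (fun s => refSol e₀ κ s x)) t
        = deriv (deriv (fun y => refSol e₀ κ t y)) x - κ ^ 2 * refSol e₀ κ t x) ∧
    (∀ t : ℝ, refSol e₀ κ t 0 = e₀ t) :=
  refSol_solves_dispersive_wave_general e₀ hC2 hzero κ
end
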